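/- Let (b_n) be a D-sequence with b_{n+1}/b_n → ∞. Then the dual group of (ℤ, τ_b) equals the dual group of (ℤ, λ_b); both equal the subgroup of ℝ/ℤ-valued characters generated by {k ↦ k/b_n + ℤ : n ∈ ℕ}, i.e., the characters k ↦ (a k / b_n) + ℤ with a ∈ ℤ, n ∈ ℕ. -/

import Mathlib

def IsDSeq (b : ℕ → ℕ) : Prop :=
  b 0 = 1 ∧ (∀ n, b n ∣ b (n + 1)) ∧ ∀ n, b n ≠ b (n + 1)

/-!
Let `u = χ 1`. If `χ` is `τ_b`-continuous, some `V_{b,m}` is mapped into the ball of radius `1/8`.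
An integer `∑ e_N b_N` with `8 m |e_N| b_N ≤ b_{N+1}` lies in `V_{b,m}`: below level `n` its part is
at most `b_n / (4m)` because `∑_{N<n} b_{N+1} ≤ 2 b_n`. Suppose no `b_N • u` vanishes and put
`d_N = ‖b_N • u‖`, `q_N = b_{N+1} / b_N`, `C_N = ⌊q_N / 8m⌋`. If `∑ C_N d_N` converges, then
`q_N d_N → 0`, so eventually `d_{N+1} = q_N d_N ≥ d_N`, which is incompatible with `d_N → 0`.
Otherwise the partial sums of `∑ C_N d_N` grow in steps of at most `1/8`, so a truncation lands in
`(1/8, 1/4]`; with signs chosen so that `±b_N • u` is the point `d_N` of the circle, this gives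
`k ∈ V_{b,m}` with `‖k • u‖ > 1/8`. So `b_n • u = 0` for some `n`, i.e. `χ` vanishes on `b_n ℤ`.
-/

open Filter Topology Finset

namespace AddCircle

theorem exists_coe_eq_abs_eq_norm (z : AddCircle (1 : ℝ)) : ∃ t : ℝ, ↑t = z ∧ |t| = ‖z‖ := by
  obtain ⟨x, rfl⟩ := QuotientAddGroup.mk_surjective z
  refine ⟨x - round x, ?_, ?_⟩
  · rw [coe_sub, sub_eq_self, coe_eq_zero_iff]
    exact ⟨round x, by simp⟩
  · exact UnitAddCircle.norm_eq.symm

theorem exists_zsmul_eq_coe_norm (z : AddCircle (1 : ℝ)) :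
    ∃ σ : ℤ, |σ| ≤ 1 ∧ σ • z = ↑‖z‖ := by
  obtain ⟨t, rfl, ht⟩ := exists_coe_eq_abs_eq_norm z
  rcases abs_cases t with ⟨h, -⟩ | ⟨h, -⟩
  · exact ⟨1, by norm_num, by rw [← ht, h, one_zsmul]⟩
  · exact ⟨-1, by norm_num, by rw [← ht, h, neg_one_zsmul, ← AddCircle.coe_neg]⟩

theorem norm_coe_of_abs_le {t : ℝ} (ht : |t| ≤ 1 / 2) : ‖(t : AddCircle (1 : ℝ))‖ = |t| :=
  (norm_coe_eq_abs_iff 1 one_ne_zero).2 (by simpa using ht)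

theorem norm_nsmul_of_mul_norm_le (z : AddCircle (1 : ℝ)) {n : ℕ} (h : n * ‖z‖ ≤ 1 / 2) :
    ‖n • z‖ = n * ‖z‖ := by
  obtain ⟨t, rfl, ht⟩ := exists_coe_eq_abs_eq_norm z
  have hnt : |n * t| = n * |t| := by rw [abs_mul, Nat.abs_cast]
  rw [← coe_nsmul, nsmul_eq_mul, norm_coe_of_abs_le (by rwa [hnt, ht]), hnt, ht]

theorem exists_eq_coe_div_of_nsmul_eq_zero {u : AddCircle (1 : ℝ)} {c : ℕ} (hc : c ≠ 0)
    (h : c • u = 0) : ∃ a : ℤ, u = ↑((a : ℝ) / c) := by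
  obtain ⟨x, rfl⟩ := QuotientAddGroup.mk_surjective u
  obtain ⟨a, ha⟩ := (coe_eq_zero_iff (1 : ℝ)).1 (by rwa [← coe_nsmul] at h)
  refine ⟨a, congrArg _ ?_⟩
  rw [eq_div_iff (Nat.cast_ne_zero.2 hc), mul_comm]
  simpa [nsmul_eq_mul] using ha.symm

end AddCircle

section TopologicalAddGroup

variable {G H : Type*} [AddGroup G] [AddMonoid H] [TopologicalSpace H] [ContinuousAdd H]

theorem AddMonoidHom.continuous_of_ker_mem_nhds [TopologicalSpace G] [IsTopologicalAddGroup G]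
    (f : G →+ H) (h : {x | f x = 0} ∈ 𝓝 (0 : G)) : Continuous f :=
  continuous_of_tendsto_nhds_zero f <|
    tendsto_const_nhds.congr' (mem_of_superset h fun _ hx => hx.symm)

theorem AddMonoidHom.continuous_of_nhds_zero_le {t₁ t₂ : TopologicalSpace G}
    [@IsTopologicalAddGroup G t₁ _] (f : G →+ H) (hle : @nhds G t₁ 0 ≤ @nhds G t₂ 0)
    (hf : Continuous[t₂, _] f) : Continuous[t₁, _] f := by
  let := t₁
  exact continuous_of_tendsto_nhds_zero f <| by
    simpa using (@Continuous.tendsto _ _ t₂ _ _ hf 0).mono_left hle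

end TopologicalAddGroup

-- The first point past `a` on the path `0, d 0, 2 d 0, …, c 0 * d 0, c 0 * d 0 + d 1, …`.
theorem exists_sum_range_mem_Ioc {c : ℕ → ℕ} {d : ℕ → ℝ} {a δ : ℝ} (ha : 0 ≤ a)
    (hd : ∀ N, c N ≠ 0 → d N ≤ δ) (h : ∃ n, a < ∑ N ∈ range n, c N * d N) :
    ∃ e ≤ c, ∃ n, ∑ N ∈ range n, e N * d N ∈ Set.Ioc a (a + δ) := by
  classical
  obtain ⟨n, hn⟩ : ∃ n, Nat.find h = n + 1 :=
    Nat.exists_eq_add_one.2 <| Nat.pos_of_ne_zero fun h0 => by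
      simpa [h0, not_lt.2 ha] using Nat.find_spec h
  set P := ∑ N ∈ range n, c N * d N
  have hP : P ≤ a := not_lt.1 (Nat.find_min h (by omega))
  have hj : ∃ j : ℕ, a < P + j * d n := ⟨c n, by simpa [hn, sum_range_succ] using Nat.find_spec h⟩
  obtain ⟨i, hi⟩ : ∃ i, Nat.find hj = i + 1 :=
    Nat.exists_eq_add_one.2 <| Nat.pos_of_ne_zero fun h0 => by
      simpa [h0, not_lt.2 hP] using Nat.find_spec hj
  have hjc : Nat.find hj ≤ c n :=
    Nat.find_min' hj (by simpa [hn, sum_range_succ] using Nat.find_spec h)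
  have hic : P + i * d n ≤ a := not_lt.1 (Nat.find_min hj (by omega))
  have hdδ : d n ≤ δ := hd n (by omega)
  refine ⟨Function.update c n (i + 1), fun N => ?_, n + 1, ?_, ?_⟩
  · rcases eq_or_ne N n with rfl | hN
    · simpa [← hi] using hjc
    · simp [hN]
  all_goals
    rw [sum_range_succ, Function.update_self,
      sum_congr rfl fun N hN => by rw [Function.update_of_ne (mem_range.1 hN).ne]]
  · simpa [← hi] using Nat.find_spec hj
  · push_cast; linarith

theorem not_summable_div_mul_norm {z : ℕ → AddCircle (1 : ℝ)} {q : ℕ → ℕ}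
    (hq : Tendsto q atTop atTop) (hz : ∀ N, z (N + 1) = q N • z N) (hz0 : ∀ N, z N ≠ 0)
    {K : ℕ} (hK : 0 < K) : ¬ Summable fun N => ((q N / K : ℕ) : ℝ) * ‖z N‖ := by
  intro hs
  have hqK : ∀ᶠ N in atTop, (q N : ℝ) ≤ 2 * K * (q N / K : ℕ) := by
    filter_upwards [hq.eventually_ge_atTop K] with N hN
    have h1 := Nat.div_add_mod (q N) K
    have h2 := Nat.mod_lt (q N) hK
    have h3 : 1 ≤ q N / K := (Nat.one_le_div_iff hK).2 hN
    exact_mod_cast (by nlinarith : q N ≤ 2 * K * (q N / K))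
  have hqz : Tendsto (fun N => q N * ‖z N‖) atTop (𝓝 0) := by
    have h0 := hs.tendsto_atTop_zero.const_mul (2 * (K : ℝ))
    rw [mul_zero] at h0
    refine squeeze_zero' (Eventually.of_forall fun N => by positivity) ?_ h0
    filter_upwards [hqK] with N hN
    rw [← mul_assoc]
    exact mul_le_mul_of_nonneg_right hN (norm_nonneg _)
  have hstep : ∀ᶠ N in atTop, ‖z (N + 1)‖ = q N * ‖z N‖ := by
    filter_upwards [hqz.eventually_le_const (by norm_num : (0 : ℝ) < 1 / 2)] with N hN
    rw [hz, AddCircle.norm_nsmul_of_mul_norm_le _ hN]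
  have hz_lim : Tendsto (fun N => ‖z N‖) atTop (𝓝 0) :=
    (tendsto_add_atTop_iff_nat 1).1 (hqz.congr' (hstep.mono fun _ h => h.symm))
  obtain ⟨N₀, hN₀⟩ := eventually_atTop.1 <| (hstep.and (hq.eventually_ge_atTop 1)).mono
    fun N h => show ‖z N‖ ≤ ‖z (N + 1)‖ by
      rw [h.1]; exact le_mul_of_one_le_left (norm_nonneg _) (by exact_mod_cast h.2)
  have hmono : ∀ N ≥ N₀, ‖z N₀‖ ≤ ‖z N‖ := fun N hN =>
    Nat.rel_of_forall_rel_succ_of_le_of_le (· ≤ ·) hN₀ le_rfl hN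
  have := ge_of_tendsto hz_lim (eventually_atTop.2 ⟨N₀, hmono⟩)
  exact (norm_pos_iff.2 (hz0 N₀)).not_ge this

namespace IsDSeq

variable {b : ℕ → ℕ}

theorem pos (hb : IsDSeq b) (n : ℕ) : 0 < b n := by
  refine Nat.pos_of_ne_zero fun h => hb.2.2 n ?_
  rw [h, eq_comm, ← zero_dvd_iff, ← h]
  exact hb.2.1 n

theorem dvd_of_le (hb : IsDSeq b) {m n : ℕ} (h : m ≤ n) : b m ∣ b n :=
  Nat.rel_of_forall_rel_succ_of_le (· ∣ ·) hb.2.1 h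

theorem div_mul_cancel (hb : IsDSeq b) (n : ℕ) : b (n + 1) / b n * b n = b (n + 1) :=
  Nat.div_mul_cancel (hb.2.1 n)

theorem two_mul_le (hb : IsDSeq b) (n : ℕ) : 2 * b n ≤ b (n + 1) := by
  obtain ⟨c, hc⟩ := hb.2.1 n
  have h0 : c ≠ 0 := by rintro rfl; exact (hb.pos (n + 1)).ne' (by simpa using hc)
  have h1 : c ≠ 1 := by rintro rfl; exact hb.2.2 n (by simpa using hc.symm)
  have : 2 ≤ c := by omega
  rw [hc]
  nlinarith

theorem sum_range_le (hb : IsDSeq b) (n : ℕ) : ∑ N ∈ range n, b (N + 1) ≤ 2 * b n := by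
  induction n with
  | zero => simp
  | succ n ih => rw [sum_range_succ]; linarith [hb.two_mul_le n]

theorem tendsto_div (hb : IsDSeq b)
    (h : Tendsto (fun n => (b (n + 1) : ℝ) / b n) atTop atTop) :
    Tendsto (fun n => b (n + 1) / b n) atTop atTop := by
  rw [← tendsto_natCast_atTop_iff (R := ℝ)]
  refine h.congr fun n => ?_
  rw [Nat.cast_div (hb.2.1 n) (by exact_mod_cast (hb.pos n).ne')]

end IsDSeq

/-- The basic neighbourhood `V_{b,m}` of `τ_b`. -/
def tauNhd (b : ℕ → ℕ) (m : ℕ) : Set ℤ :=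
  {k | ∀ n : ℕ, ∃ z : ℤ, |(k : ℝ) / b n - z| ≤ 1 / (4 * m)}

theorem exists_abs_div_sub_le_of_dvd_sub {c m : ℕ} (hc : 0 < c) (hm : 0 < m) {k r : ℤ}
    (hdvd : (c : ℤ) ∣ k - r) (hr : 4 * m * |r| ≤ c) :
    ∃ z : ℤ, |(k : ℝ) / c - z| ≤ 1 / (4 * m) := by
  obtain ⟨z, hz⟩ := hdvd
  have hcR : (0 : ℝ) < c := by exact_mod_cast hc
  refine ⟨z, ?_⟩
  have hk : (k : ℝ) = c * z + r := by rw [← sub_eq_iff_eq_add]; exact_mod_cast hz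
  rw [hk, add_div, mul_div_cancel_left₀ _ hcR.ne', add_sub_cancel_left, abs_div, Nat.abs_cast,
    div_le_div_iff₀ hcR (by positivity)]
  exact_mod_cast (by linarith : |r| * (4 * m) ≤ 1 * c)

theorem dvd_of_abs_div_sub_le {c : ℕ} (hc : 0 < c) {k z : ℤ}
    (h : |(k : ℝ) / c - z| ≤ 1 / (4 * c)) : (c : ℤ) ∣ k := by
  have hcR : (0 : ℝ) < c := by exact_mod_cast hc
  have hlt : |((k - c * z : ℤ) : ℝ)| < 1 := by
    have : ((k - c * z : ℤ) : ℝ) = c * ((k : ℝ) / c - z) := by push_cast; field_simp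
    rw [this, abs_mul, Nat.abs_cast]
    calc (c : ℝ) * |(k : ℝ) / c - z| ≤ c * (1 / (4 * c)) := by gcongr
      _ < 1 := by field_simp; norm_num
  have h0 : k - c * z = 0 := Int.abs_lt_one_iff.1 (by exact_mod_cast hlt)
  exact ⟨z, by linarith⟩

theorem tauNhd_subset_dvd {b : ℕ → ℕ} (hb : IsDSeq b) (n : ℕ) :
    tauNhd b (b n) ⊆ {k | (b n : ℤ) ∣ k} := fun _ hk =>
  (hk n).elim fun _ hz => dvd_of_abs_div_sub_le (hb.pos n) hz

theorem sum_mem_tauNhd {b : ℕ → ℕ} (hb : IsDSeq b) {m : ℕ} (hm : 0 < m) (e : ℕ → ℤ) (L : ℕ)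
    (he : ∀ N, 8 * m * |e N| * b N ≤ b (N + 1)) :
    ∑ N ∈ range L, e N * b N ∈ tauNhd b m := by
  intro n
  set low := (range L).filter (· < n)
  refine exists_abs_div_sub_le_of_dvd_sub (hb.pos n) hm (r := ∑ N ∈ low, e N * b N) ?_ ?_
  · rw [← sum_filter_add_sum_filter_not (range L) (· < n), add_sub_cancel_left]
    refine dvd_sum fun N hN => dvd_mul_of_dvd_right ?_ _
    exact Int.natCast_dvd_natCast.2 (hb.dvd_of_le (not_lt.1 (mem_filter.1 hN).2))
  · have hlow : low ⊆ range n := fun N hN => mem_range.2 (mem_filter.1 hN).2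
    have habs : |∑ N ∈ low, e N * b N| ≤ ∑ N ∈ range n, |e N| * b N :=
      calc |∑ N ∈ low, e N * b N| ≤ ∑ N ∈ low, |e N| * b N := by
            simpa only [abs_mul, Nat.abs_cast] using
              abs_sum_le_sum_abs (fun N => e N * (b N : ℤ)) low
        _ ≤ ∑ N ∈ range n, |e N| * b N :=
            sum_le_sum_of_subset_of_nonneg hlow fun N _ _ => by positivity [abs_nonneg (e N)]
    have hsum : 8 * m * ∑ N ∈ range n, |e N| * b N ≤ 2 * b n := by
      rw [mul_sum]
      calc ∑ N ∈ range n, 8 * m * (|e N| * b N) ≤ ∑ N ∈ range n, (b (N + 1) : ℤ) :=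
            sum_le_sum fun N _ => by rw [← mul_assoc]; exact he N
        _ ≤ 2 * b n := by exact_mod_cast hb.sum_range_le n
    nlinarith

theorem natCast_mem_tauNhd {b : ℕ → ℕ} (hb : IsDSeq b) {m : ℕ} (hm : 0 < m) {N : ℕ}
    (hN : 8 * m * b N ≤ b (N + 1)) : (b N : ℤ) ∈ tauNhd b m := by
  have he : ∀ M, 8 * m * |if M = N then (1 : ℤ) else 0| * b M ≤ b (M + 1) := fun M => by
    split_ifs with hM
    · subst hM
      simpa using (by exact_mod_cast hN : (8 * m * b M : ℤ) ≤ b (M + 1))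
    · simp
  simpa [ite_mul] using sum_mem_tauNhd hb hm _ (N + 1) he

theorem exists_mem_tauNhd_zsmul_eq_coe {b : ℕ → ℕ} (hb : IsDSeq b) {m : ℕ} (hm : 0 < m)
    (u : AddCircle (1 : ℝ)) (e : ℕ → ℕ) (n : ℕ) (he : ∀ N, 8 * m * e N * b N ≤ b (N + 1)) :
    ∃ k ∈ tauNhd b m, k • u = ↑(∑ N ∈ range n, e N * ‖b N • u‖) := by
  choose σ hσ1 hσ using fun N => AddCircle.exists_zsmul_eq_coe_norm (b N • u)
  refine ⟨∑ N ∈ range n, σ N * e N * b N, sum_mem_tauNhd hb hm _ n fun N => ?_, ?_⟩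
  · have hσe : |σ N * e N| ≤ e N := by
      rw [abs_mul, Nat.abs_cast]
      exact mul_le_of_le_one_left (by positivity) (hσ1 N)
    calc 8 * m * |σ N * e N| * b N ≤ 8 * m * (e N : ℤ) * b N := by gcongr
      _ ≤ b (N + 1) := by exact_mod_cast he N
  · rw [sum_smul, QuotientAddGroup.mk_sum]
    refine sum_congr rfl fun N _ => ?_
    rw [mul_comm (σ N), mul_assoc, mul_zsmul, mul_zsmul, natCast_zsmul u, hσ, natCast_zsmul,
      ← AddCircle.coe_nsmul, nsmul_eq_mul]

theorem exists_nsmul_eq_zero_of_norm_zsmul_le {b : ℕ → ℕ} (hb : IsDSeq b)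
    (hq : Tendsto (fun N => b (N + 1) / b N) atTop atTop) {m : ℕ} (hm : 0 < m)
    {u : AddCircle (1 : ℝ)} (hu : ∀ k ∈ tauNhd b m, ‖k • u‖ ≤ 1 / 8) : ∃ n, b n • u = 0 := by
  by_contra! hu0
  set C : ℕ → ℕ := fun N => b (N + 1) / b N / (8 * m)
  have hC : ∀ N, 8 * m * C N * b N ≤ b (N + 1) := fun N => by
    conv_rhs => rw [← hb.div_mul_cancel N]
    exact Nat.mul_le_mul_right _ (by rw [mul_comm]; exact Nat.div_mul_le_self _ _)
  have hsmall : ∀ N, C N ≠ 0 → ‖b N • u‖ ≤ 1 / 8 := fun N hN => by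
    have h := hC N
    have : 1 ≤ C N := Nat.pos_of_ne_zero hN
    simpa using hu _ (natCast_mem_tauNhd hb hm (by nlinarith : 8 * m * b N ≤ b (N + 1)))
  have hz : ∀ N, b (N + 1) • u = (b (N + 1) / b N) • b N • u := fun N => by
    rw [← mul_nsmul', hb.div_mul_cancel]
  have hdiv := (not_summable_iff_tendsto_nat_atTop_of_nonneg fun N => by positivity).1
    (not_summable_div_mul_norm hq hz hu0 (by positivity : 0 < 8 * m))
  obtain ⟨e, heC, n, hn⟩ := exists_sum_range_mem_Ioc (a := 1 / 8) (by norm_num) hsmall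
    (hdiv.eventually_gt_atTop _).exists
  obtain ⟨k, hk, hku⟩ := exists_mem_tauNhd_zsmul_eq_coe hb hm u e n fun N =>
    (Nat.mul_le_mul_right _ (Nat.mul_le_mul_left _ (heC N))).trans (hC N)
  have hpos : 0 < ∑ N ∈ range n, e N * ‖b N • u‖ := by linarith [hn.1]
  have := hu k hk
  rw [hku, AddCircle.norm_coe_of_abs_le (by rw [abs_of_pos hpos]; linarith [hn.2]),
    abs_of_pos hpos] at this
  linarith [hn.1]

theorem stmt_17 (b : ℕ → ℕ) (hb : IsDSeq b)
    (hinf : Filter.Tendsto (fun n => (b (n + 1) : ℝ) / b n) Filter.atTop Filter.atTop)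
    (tLin tTau : TopologicalSpace ℤ)
    (hLing : @IsTopologicalAddGroup ℤ tLin _) (hTaug : @IsTopologicalAddGroup ℤ tTau _)
    (hLinb : (@nhds ℤ tLin 0).HasBasis (fun _ : ℕ => True) (fun n => {x : ℤ | (b n : ℤ) ∣ x}))
    (hTaub : (@nhds ℤ tTau 0).HasBasis (fun m : ℕ => 0 < m)
      (fun m => {k : ℤ | ∀ n : ℕ, ∃ z : ℤ, |(k : ℝ) / b n - z| ≤ 1 / (4 * m)})) :
    ∀ χ : ℤ →+ AddCircle (1 : ℝ),
      (@Continuous ℤ (AddCircle (1 : ℝ)) tTau _ χ ↔ @Continuous ℤ (AddCircle (1 : ℝ)) tLin _ χ) ∧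
      (@Continuous ℤ (AddCircle (1 : ℝ)) tTau _ χ ↔
        ∃ (a : ℤ) (n : ℕ), ∀ k : ℤ,
          χ k = ((a * k / (b n : ℝ) : ℝ) : AddCircle (1 : ℝ))) := by
  intro χ
  have hle : @nhds ℤ tTau 0 ≤ @nhds ℤ tLin 0 :=
    hLinb.ge_iff.2 fun n _ => hTaub.mem_iff.2 ⟨b n, hb.pos n, tauNhd_subset_dvd hb n⟩
  have hLT := χ.continuous_of_nhds_zero_le hle
  have hTE : Continuous[tTau, _] χ →
      ∃ (a : ℤ) (n : ℕ), ∀ k : ℤ, χ k = ((a * k / (b n : ℝ) : ℝ) : AddCircle (1 : ℝ)) := by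
    intro hc
    obtain ⟨m, hm, hsub⟩ := hTaub.mem_iff.1 <|
      (@Continuous.tendsto' _ _ tTau _ _ hc 0 0 (map_zero χ))
        (Metric.closedBall_mem_nhds 0 (by norm_num : (0 : ℝ) < 1 / 8))
    obtain ⟨n, hn⟩ := exists_nsmul_eq_zero_of_norm_zsmul_le hb (hb.tendsto_div hinf) hm
      fun k hk => by
        have := hsub hk
        rwa [Set.mem_preimage, Metric.mem_closedBall, dist_zero_right, χ.apply_int] at this
    obtain ⟨a, ha⟩ := AddCircle.exists_eq_coe_div_of_nsmul_eq_zero (hb.pos n).ne' hn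
    refine ⟨a, n, fun k => ?_⟩
    rw [χ.apply_int, ha, ← AddCircle.coe_zsmul, zsmul_eq_mul]
    congr 1
    ring
  have hEL : (∃ (a : ℤ) (n : ℕ), ∀ k : ℤ, χ k = ((a * k / (b n : ℝ) : ℝ) : AddCircle (1 : ℝ))) →
      Continuous[tLin, _] χ := by
    rintro ⟨a, n, ha⟩
    refine @AddMonoidHom.continuous_of_ker_mem_nhds _ _ _ _ _ _ tLin _ χ
      (mem_of_superset (hLinb.mem_of_mem (i := n) trivial) ?_)
    rintro _ ⟨t, rfl⟩
    rw [Set.mem_ofPred_eq, ha, AddCircle.coe_eq_zero_iff]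
    exact ⟨a * t, by rw [zsmul_eq_mul, mul_one]; push_cast; field_simp [(hb.pos n).ne']⟩
  exact ⟨⟨hEL ∘ hTE, hLT⟩, hTE, hLT ∘ hEL⟩
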